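/- arXiv:2310.15900 — 7 statements merged into one kernel-verified Lean document; each statement's English description precedes it below -/
import Mathlib

section
/- Let n be a friend of 10. Then n is a perfect square, n is divisible by 5, and n is coprime to 6. -/
/-!
If `n` is a friend of `10` then `5 σ(n) = 9 n`, so `5 ∣ n`. Abundancy strictly increases
along proper divisibility, so `10 ∤ n` and `n` is odd; then `σ(n)` is odd as well, which
forces every odd prime to occur in `n` to an even power, so `n` is a square. If moreover
`3 ∣ n`, then `3² · 5² ∣ n`: either `5⁴ ∣ n`, or `5` occurs exactly twice, so that
`31 = σ(5²)` divides `σ(n)`, hence `n`, hence `31² ∣ n`. In both cases `n` has a divisor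
(`75²`, resp. `465²`) whose abundancy already exceeds `9/5`.
-/

open ArithmeticFunction
open scoped ArithmeticFunction.sigma

/-- The abundancy index `σ(n)/n` as a rational number. -/
noncomputable def abundancy (n : ℕ) : ℚ := (σ 1 n : ℚ) / n

/-- `m` is a friend of `n` if they are distinct positive integers with the same
abundancy index. -/
def IsFriend (m n : ℕ) : Prop := 0 < m ∧ 0 < n ∧ m ≠ n ∧ abundancy m = abundancy n

theorem Nat.isSquare_of_forall_even_factorization {n : ℕ} (h : ∀ p, Even (n.factorization p)) :
    IsSquare n := by
  rcases eq_or_ne n 0 with rfl | hn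
  · exact ⟨0, rfl⟩
  refine ⟨n.factorization.prod fun p k => p ^ (k / 2), ?_⟩
  conv_lhs => rw [← Nat.prod_factorization_pow_eq_self hn]
  rw [← Finsupp.prod_mul]
  refine Finsupp.prod_congr fun p _ => ?_
  rw [← pow_add, ← two_mul, Nat.two_mul_div_two_of_even (h p)]

namespace ArithmeticFunction

theorem sigma_dvd_sigma_mul_of_coprime {k a b : ℕ} (h : a.Coprime b) : σ k a ∣ σ k (a * b) :=
  ⟨σ k b, isMultiplicative_sigma.map_mul_of_coprime h⟩

theorem odd_sigma_one_prime_pow_iff {p k : ℕ} (hp : p.Prime) (hodd : Odd p) :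
    Odd (σ 1 (p ^ k)) ↔ Even k := by
  rw [sigma_one_apply_prime_pow hp, Finset.odd_sum_iff_odd_card_odd,
    Finset.filter_true_of_mem fun i _ => hodd.pow, Finset.card_range, Nat.odd_add_one,
    Nat.not_odd_iff_even]

theorem even_factorization_of_odd_sigma {n p : ℕ} (hσ : Odd (σ 1 n)) (hp : Odd p) :
    Even (n.factorization p) := by
  by_cases hpp : p.Prime
  swap
  · simp [Nat.factorization_eq_zero_of_not_prime n hpp]
  rcases eq_or_ne n 0 with rfl | hn
  · simp
  rw [← odd_sigma_one_prime_pow_iff hpp hp]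
  refine Odd.of_dvd_nat hσ ?_
  conv_rhs => rw [← Nat.ordProj_mul_ordCompl_eq_self n p]
  exact sigma_dvd_sigma_mul_of_coprime ((Nat.coprime_ordCompl hpp hn).pow_left _)

theorem isSquare_of_odd_of_odd_sigma {n : ℕ} (hn : Odd n) (hσ : Odd (σ 1 n)) : IsSquare n := by
  refine Nat.isSquare_of_forall_even_factorization fun p => ?_
  rcases Nat.even_or_odd p with hp | hp
  · have hpn : ¬ p ∣ n := fun h =>
      Nat.not_even_iff_odd.2 hn (even_iff_two_dvd.2 (hp.two_dvd.trans h))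
    simp [Nat.factorization_eq_zero_of_not_dvd hpn]
  · exact even_factorization_of_odd_sigma hσ hp

end ArithmeticFunction

theorem abundancy_eq_sum_inv (n : ℕ) :
    abundancy n = ∑ d ∈ n.divisors, (d : ℚ)⁻¹ := by
  rw [abundancy, sigma_one_apply, Nat.cast_sum, Finset.sum_div,
    ← Nat.sum_div_divisors n fun d => (d : ℚ)⁻¹]
  refine Finset.sum_congr rfl fun d hd => ?_
  have hd0 : (d : ℚ) ≠ 0 := Nat.cast_ne_zero.2 (Nat.pos_of_mem_divisors hd).ne'
  rw [Nat.cast_div (Nat.dvd_of_mem_divisors hd) hd0, inv_div]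

theorem abundancy_le_of_dvd {m n : ℕ} (h : m ∣ n) (hn : n ≠ 0) :
    abundancy m ≤ abundancy n := by
  rw [abundancy_eq_sum_inv, abundancy_eq_sum_inv]
  exact Finset.sum_le_sum_of_subset_of_nonneg (Nat.divisors_subset_of_dvd hn h)
    fun _ _ _ => by positivity

theorem abundancy_lt_of_dvd_of_ne {m n : ℕ} (h : m ∣ n) (hmn : m ≠ n) (hn : n ≠ 0) :
    abundancy m < abundancy n := by
  rw [abundancy_eq_sum_inv, abundancy_eq_sum_inv]
  refine Finset.sum_lt_sum_of_subset (Nat.divisors_subset_of_dvd hn h)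
    (Nat.mem_divisors_self n hn)
    (fun hnm => hmn (Nat.dvd_antisymm h (Nat.dvd_of_mem_divisors hnm))) (by positivity)
    fun _ _ _ => by positivity

theorem five_mul_sigma_eq_of_abundancy_eq {n : ℕ} (hn : n ≠ 0) (h : abundancy n = 9 / 5) :
    5 * σ 1 n = 9 * n := by
  rw [abundancy, div_eq_div_iff (Nat.cast_ne_zero.2 hn) (by norm_num)] at h
  exact_mod_cast (by push_cast; linarith : ((5 * σ 1 n : ℕ) : ℚ) = (9 * n : ℕ))

theorem abundancy_ten : abundancy 10 = 9 / 5 := by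
  rw [abundancy, show σ 1 10 = 18 by rw [sigma_one_apply]; decide]
  norm_num

theorem abundancy_seventy_five_sq : abundancy (75 * 75) = 10153 / 5625 := by
  rw [abundancy, show 75 * 75 = 3 ^ 2 * 5 ^ 4 by norm_num,
    isMultiplicative_sigma.map_mul_of_coprime (by norm_num),
    sigma_one_apply_prime_pow Nat.prime_three, sigma_one_apply_prime_pow Nat.prime_five]
  norm_num [Finset.sum_range_succ]

theorem abundancy_four_sixty_five_sq : abundancy (465 * 465) = 400179 / 216225 := by
  rw [abundancy, show 465 * 465 = 3 ^ 2 * (5 ^ 2 * 31 ^ 2) by norm_num,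
    isMultiplicative_sigma.map_mul_of_coprime (by norm_num),
    isMultiplicative_sigma.map_mul_of_coprime (by norm_num),
    sigma_one_apply_prime_pow Nat.prime_three, sigma_one_apply_prime_pow Nat.prime_five,
    sigma_one_apply_prime_pow (by norm_num)]
  norm_num [Finset.sum_range_succ]

theorem not_three_dvd_of_abundancy_eq {n : ℕ} (hsq : IsSquare n) (hn : n ≠ 0) (h5 : 5 ∣ n)
    (hab : abundancy n = 9 / 5) : ¬ 3 ∣ n := by
  obtain ⟨r, rfl⟩ := hsq
  have root_dvd : ∀ p, p.Prime → p ∣ r * r → p ∣ r := fun _ hp h =>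
    (hp.dvd_mul.1 h).elim id id
  intro h3
  replace h3 := root_dvd 3 Nat.prime_three h3
  replace h5 := root_dvd 5 Nat.prime_five h5
  have bound : ∀ m, m ∣ r → abundancy (m * m) ≤ 9 / 5 := fun m hm =>
    hab ▸ abundancy_le_of_dvd (Nat.mul_dvd_mul hm hm) hn
  by_cases h25 : 25 ∣ r
  · have := bound 75 (Nat.Coprime.mul_dvd_of_dvd_of_dvd (by norm_num) h3 h25)
    rw [abundancy_seventy_five_sq] at this
    norm_num at this
  have h31 : 31 ∣ r := by
    refine root_dvd 31 (by norm_num) ?_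
    obtain ⟨s, rfl⟩ := h5
    have hs : Nat.Coprime 5 s := (Nat.Prime.coprime_iff_not_dvd Nat.prime_five).2
      fun ⟨t, ht⟩ => h25 ⟨t, by rw [ht]; ring⟩
    have hσ : 31 ∣ σ 1 (5 * s * (5 * s)) := by
      rw [show 5 * s * (5 * s) = 5 ^ 2 * s ^ 2 by ring]
      exact (show σ 1 (5 ^ 2) = 31 by rw [sigma_one_apply_prime_pow Nat.prime_five]; decide) ▸
        sigma_dvd_sigma_mul_of_coprime (hs.pow 2 2)
    exact Nat.Coprime.dvd_of_dvd_mul_left (by norm_num)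
      (five_mul_sigma_eq_of_abundancy_eq hn hab ▸ hσ.mul_left 5)
  have := bound 465 (Nat.Coprime.mul_dvd_of_dvd_of_dvd (by norm_num)
    (Nat.Coprime.mul_dvd_of_dvd_of_dvd (by norm_num) h3 h5) h31)
  rw [abundancy_four_sixty_five_sq] at this
  norm_num at this

theorem friend_of_ten_square_five_dvd_coprime_six (n : ℕ) (hn : IsFriend n 10) :
    IsSquare n ∧ 5 ∣ n ∧ Nat.Coprime n 6 := by
  obtain ⟨hn0, -, hne, hab⟩ := hn
  rw [abundancy_ten] at hab
  have key : 5 * σ 1 n = 9 * n := five_mul_sigma_eq_of_abundancy_eq hn0.ne' hab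
  have h5 : 5 ∣ n := Nat.Coprime.dvd_of_dvd_mul_left (by norm_num) ⟨σ 1 n, key.symm⟩
  have hodd : Odd n := Nat.not_even_iff_odd.1 fun heven =>
    have h10 : 10 ∣ n := Nat.Coprime.mul_dvd_of_dvd_of_dvd (by norm_num) heven.two_dvd h5
    (abundancy_lt_of_dvd_of_ne h10 hne.symm hn0.ne').ne (by rw [abundancy_ten, hab])
  have hσ : Odd (σ 1 n) := (Nat.odd_mul.1 (key ▸ (by decide : Odd 9).mul hodd)).2
  have hsq : IsSquare n := isSquare_of_odd_of_odd_sigma hodd hσ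
  have h3 : ¬ 3 ∣ n := not_three_dvd_of_abundancy_eq hsq hn0.ne' h5 hab
  exact ⟨hsq, h5,
    hodd.coprime_two_right.mul_right (Nat.prime_three.coprime_iff_not_dvd.2 h3).symm⟩
end

section
/- Let ℓ₁, k₁, k be integers with 0 ≤ ℓ₁ ≤ k₁ < k, and let n = ∏_{j=1}^{k} p_j^{a_j} where the p_j are pairwise distinct primes, the a_j are positive integers, and p_{k₁+1} < p_{k₁+2} < ⋯ < p_k. Let b_{ℓ₁+1}, …, b_{k₁} be positive integers with a_j ≥ b_j for ℓ₁ < j ≤ k₁. Let t_min and t_max be positive real numbers with t_min ≤ σ₋₁(n) ≤ t_max, and set M = t_max / ((∏_{j=1}^{ℓ₁} σ₋₁(p_j^{a_j})) · (∏_{j=ℓ₁+1}^{k₁} σ₋₁(p_j^{b_j}))). Then M > 1 and 1/(M − 1) ≤ p_{k₁+1}. -/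
open ArithmeticFunction
open scoped ArithmeticFunction.sigma

/-!
Since σ₋₁ is multiplicative and `m ∣ n` implies σ₋₁(m) ≤ σ₋₁(n), every factor σ₋₁(p_j^{a_j}) is at
least 1, lowering the exponents a_j to b_j only lowers the product, and the factor of the next prime
q = p_{k₁+1} is at least σ₋₁(q) = 1 + 1/q. Hence the denominator D of M satisfies
D (1 + 1/q) ≤ σ₋₁(n) ≤ t_max, that is M ≥ 1 + 1/q.
-/

open Finset Function

theorem Finset.prod_Icc_add_one_mul_prod_Icc_add_one {M : Type*} [CommMonoid M] (f : ℕ → M)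
    {m n k : ℕ} (hmn : m ≤ n) (hnk : n ≤ k) :
    (∏ i ∈ Icc (m + 1) n, f i) * ∏ i ∈ Icc (n + 1) k, f i = ∏ i ∈ Icc (m + 1) k, f i := by
  simpa only [Icc_add_one_left_eq_Ioc] using prod_Ioc_consecutive f hmn hnk

theorem Finset.prod_Icc_mul_le_prod_Icc {α : Type*} [CommSemiring α] [PartialOrder α]
    [IsOrderedRing α] {f : ℕ → α} {m n k : ℕ} {c : α} (hf : ∀ i ∈ Icc m k, 1 ≤ f i)
    (hmn : m ≤ n + 1) (hnk : n < k) (hc : c ≤ f (n + 1)) :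
    (∏ i ∈ Icc m n, f i) * c ≤ ∏ i ∈ Icc m k, f i := by
  have hf0 : ∀ i ∈ Icc m k, 0 ≤ f i := fun i hi => zero_le_one.trans (hf i hi)
  calc (∏ i ∈ Icc m n, f i) * c
      ≤ (∏ i ∈ Icc m n, f i) * f (n + 1) :=
        mul_le_mul_of_nonneg_left hc (prod_nonneg fun i hi => hf0 i (Icc_subset_Icc_right
          hnk.le hi))
    _ = ∏ i ∈ Icc m (n + 1), f i := (prod_Icc_succ_top hmn f).symm
    _ ≤ ∏ i ∈ Icc m k, f i := prod_le_prod_of_subset_of_one_le (Icc_subset_Icc_right hnk)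
        (fun i hi => hf0 i (Icc_subset_Icc_right hnk hi))
        fun i hi _ => hf i hi

theorem one_lt_div_and_one_div_div_sub_one_le {α : Type*} [Field α] [LinearOrder α]
    [IsStrictOrderedRing α] {q D t : α} (hq : 0 < q) (hD : 0 < D) (h : D * (1 + 1 / q) ≤ t) :
    1 < t / D ∧ 1 / (t / D - 1) ≤ q := by
  have hinv : 0 < 1 / q := one_div_pos.mpr hq
  have hM : 1 + 1 / q ≤ t / D := by rwa [le_div_iff₀ hD, mul_comm]
  refine ⟨by linarith, ?_⟩
  calc 1 / (t / D - 1) ≤ 1 / (1 / q) := one_div_le_one_div_of_le hinv (by linarith)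
    _ = q := one_div_one_div q

namespace Nat

theorem abundancyIndex_eq_sigma_div (n : ℕ) : n.abundancyIndex = (σ 1 n : ℚ) / n := by
  simp [abundancyIndex, sigma_one_apply]

theorem cast_abundancyIndex (n : ℕ) : (n.abundancyIndex : ℝ) = (σ 1 n : ℝ) / n := by
  simp [abundancyIndex_eq_sigma_div]

theorem abundancyIndex_nonneg (n : ℕ) : 0 ≤ n.abundancyIndex := by
  unfold abundancyIndex; positivity

theorem one_le_abundancyIndex {n : ℕ} (hn : n ≠ 0) : 1 ≤ n.abundancyIndex := by
  simpa [abundancyIndex] using abundancyIndex_le_of_dvd hn (one_dvd n)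

theorem abundancyIndex_pos {n : ℕ} (hn : n ≠ 0) : 0 < n.abundancyIndex :=
  one_pos.trans_le (one_le_abundancyIndex hn)

theorem Prime.abundancyIndex_eq {p : ℕ} (hp : p.Prime) : p.abundancyIndex = 1 + 1 / p := by
  have : (p : ℚ) ≠ 0 := by exact_mod_cast hp.ne_zero
  rw [abundancyIndex, hp.sum_divisors]
  field_simp
  push_cast
  ring

theorem one_add_one_div_le_abundancyIndex {p n : ℕ} (hp : p.Prime) (hpn : p ∣ n) (hn : n ≠ 0) :
    1 + 1 / (p : ℚ) ≤ n.abundancyIndex :=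
  hp.abundancyIndex_eq ▸ abundancyIndex_le_of_dvd hn hpn

theorem abundancyIndex_prod {ι : Type*} {s : Finset ι} {f : ι → ℕ}
    (h : (s : Set ι).Pairwise (Coprime on f)) :
    (∏ i ∈ s, f i).abundancyIndex = ∏ i ∈ s, (f i).abundancyIndex := by
  simp only [abundancyIndex_eq_sigma_div, isMultiplicative_sigma.map_prod f s h, cast_prod,
    prod_div_distrib]

theorem prod_abundancyIndex_le_of_dvd {ι : Type*} {s : Finset ι} {f g : ι → ℕ}
    (hf : ∀ i ∈ s, f i ≠ 0) (hgf : ∀ i ∈ s, g i ∣ f i) :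
    ∏ i ∈ s, (g i).abundancyIndex ≤ ∏ i ∈ s, (f i).abundancyIndex :=
  prod_le_prod (fun _ _ => abundancyIndex_nonneg _) fun i hi =>
    abundancyIndex_le_of_dvd (hf i hi) (hgf i hi)

theorem pairwise_coprime_prime_pow {ι : Type*} {s : Finset ι} {p : ι → ℕ} (a : ι → ℕ)
    (hp : ∀ i ∈ s, (p i).Prime) (hinj : Set.InjOn p s) :
    (s : Set ι).Pairwise (Coprime on fun i => p i ^ a i) :=
  fun i hi j hj hij => coprime_pow_primes _ _ (hp i hi) (hp j hj) (hinj.ne hi hj hij)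

end Nat

open Nat

theorem bounds_on_smallest_unknown_prime_a_general
    (l1 k1 k : ℕ) (hl1k1 : l1 ≤ k1) (hk1k : k1 < k)
    (p a b : ℕ → ℕ)
    (hp : ∀ j ∈ Finset.Icc 1 k, (p j).Prime)
    (hdist : ∀ i ∈ Finset.Icc 1 k, ∀ j ∈ Finset.Icc 1 k, i ≠ j → p i ≠ p j)
    (ha : ∀ j ∈ Finset.Icc 1 k, 0 < a j)
    (hb : ∀ j : ℕ, l1 < j → j ≤ k1 → 0 < b j ∧ b j ≤ a j)
    (n : ℕ) (hn : n = ∏ j ∈ Finset.Icc 1 k, p j ^ a j)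
    (tmax : ℝ)
    (hhigh : (σ 1 n : ℝ) / n ≤ tmax)
    (M : ℝ)
    (hM : M = tmax /
      ((∏ j ∈ Finset.Icc 1 l1, (σ 1 (p j ^ a j) : ℝ) / (p j ^ a j : ℕ)) *
       (∏ j ∈ Finset.Icc (l1 + 1) k1, (σ 1 (p j ^ b j) : ℝ) / (p j ^ b j : ℕ)))) :
    1 < M ∧ 1 / (M - 1) ≤ p (k1 + 1) := by
  set A : ℕ → ℚ := fun j => (p j ^ a j).abundancyIndex
  set D : ℚ := (∏ j ∈ Icc 1 l1, A j) * ∏ j ∈ Icc (l1 + 1) k1, (p j ^ b j).abundancyIndex with hD_def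
  have hpow : ∀ j ∈ Icc 1 k, ∀ e, p j ^ e ≠ 0 := fun j hj _ => pow_ne_zero _ (hp j hj).ne_zero
  have hnext : k1 + 1 ∈ Icc 1 k := mem_Icc.mpr ⟨by omega, hk1k⟩
  have hn' : n.abundancyIndex = ∏ j ∈ Icc 1 k, A j :=
    hn ▸ abundancyIndex_prod (pairwise_coprime_prime_pow a hp fun i hi j hj => not_imp_not.mp
      (hdist i hi j hj))
  have hDpos : 0 < D := mul_pos
    (prod_pos fun j hj => abundancyIndex_pos (hpow j (by grind) _))
    (prod_pos fun j hj => abundancyIndex_pos (hpow j (by grind) _))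
  have hD : D ≤ ∏ j ∈ Icc 1 k1, A j := by
    rw [hD_def, ← prod_Icc_add_one_mul_prod_Icc_add_one A (zero_le l1) hl1k1]
    refine mul_le_mul_of_nonneg_left (prod_abundancyIndex_le_of_dvd
      (fun j hj => hpow j (by grind) _) fun j hj => pow_dvd_pow _ ?_)
      (prod_nonneg fun j _ => abundancyIndex_nonneg _)
    exact (hb j (by grind) (by grind)).2
  have key : D * (1 + 1 / p (k1 + 1)) ≤ n.abundancyIndex :=
    hn' ▸ (mul_le_mul_of_nonneg_right hD (by positivity)).trans (prod_Icc_mul_le_prod_Icc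
      (fun j hj => one_le_abundancyIndex (hpow j hj _)) (by omega) hk1k
      (one_add_one_div_le_abundancyIndex (hp _ hnext) (dvd_pow_self _ (ha _ hnext).ne')
        (hpow _ hnext _)))
  simp only [← cast_abundancyIndex, ← Rat.cast_prod, ← Rat.cast_mul] at hhigh hM
  rw [hM, ← hD_def]
  refine one_lt_div_and_one_div_div_sub_one_le (by exact_mod_cast (hp _ hnext).pos)
    (by exact_mod_cast hDpos) ?_
  simpa using (Rat.cast_le.mpr key).trans hhigh

theorem bounds_on_smallest_unknown_prime_a
    (l1 k1 k : ℕ) (hl1k1 : l1 ≤ k1) (hk1k : k1 < k)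
    (p a b : ℕ → ℕ)
    (hp : ∀ j ∈ Finset.Icc 1 k, (p j).Prime)
    (hdist : ∀ i ∈ Finset.Icc 1 k, ∀ j ∈ Finset.Icc 1 k, i ≠ j → p i ≠ p j)
    (ha : ∀ j ∈ Finset.Icc 1 k, 0 < a j)
    (hsorted : ∀ i j : ℕ, k1 + 1 ≤ i → i < j → j ≤ k → p i < p j)
    (hb : ∀ j : ℕ, l1 < j → j ≤ k1 → 0 < b j ∧ b j ≤ a j)
    (n : ℕ) (hn : n = ∏ j ∈ Finset.Icc 1 k, p j ^ a j)
    (tmin tmax : ℝ) (htmin : 0 < tmin) (htmax : 0 < tmax)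
    (hlow : tmin ≤ (σ 1 n : ℝ) / n) (hhigh : (σ 1 n : ℝ) / n ≤ tmax)
    (M : ℝ)
    (hM : M = tmax /
      ((∏ j ∈ Finset.Icc 1 l1, (σ 1 (p j ^ a j) : ℝ) / (p j ^ a j : ℕ)) *
       (∏ j ∈ Finset.Icc (l1 + 1) k1, (σ 1 (p j ^ b j) : ℝ) / (p j ^ b j : ℕ)))) :
    1 < M ∧ 1 / (M - 1) ≤ p (k1 + 1) :=
  bounds_on_smallest_unknown_prime_a_general l1 k1 k hl1k1 hk1k p a b hp hdist ha hb n hn tmax hhigh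
    M hM
end

section
/- Let ℓ₁, k₁, k be integers with 0 ≤ ℓ₁ ≤ k₁ < k, and let n = ∏_{j=1}^{k} p_j^{a_j} where the p_j are pairwise distinct primes, the a_j are positive integers, and p_{k₁+1} < p_{k₁+2} < ⋯ < p_k. Let b_{ℓ₁+1}, …, b_{k₁} be positive integers with a_j ≥ b_j for ℓ₁ < j ≤ k₁. Let t_min and t_max be positive real numbers with t_min ≤ σ₋₁(n) ≤ t_max, and set M = t_max / ((∏_{j=1}^{ℓ₁} σ₋₁(p_j^{a_j})) · (∏_{j=ℓ₁+1}^{k₁} σ₋₁(p_j^{b_j}))). If additionally a_{k₁+1} ≥ 2, then (1/(M − 1)) · (8/((2 − M)² + 7)) < p_{k₁+1}. -/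
open ArithmeticFunction
open scoped ArithmeticFunction.sigma Function

/-!
Let `q = p (k1 + 1)`. The known part `m = ∏_{j ≤ l1} p_j ^ a_j * ∏_{l1 < j ≤ k1} p_j ^ b_j` of `n`
times `q ^ 2` divides `n`. Since `σ₋₁` is multiplicative and monotone for divisibility
(`σ₋₁(n) = ∑_{d ∣ n} 1 / d`), `σ₋₁(m) σ₋₁(q²) ≤ tmax`, that is `1 + 1/q + 1/q² ≤ M`.
With `u = 1/q ≤ 1/2` and `x = M - 1 ≥ u + u²` the claim reads `8u < x((1 - x)² + 7)`.
The cubic on the right is increasing, and at `x = u + u²` it exceeds `8u` by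
`u³(1 + u)³ + 2u²(1 - u)(3 + u) > 0`.
-/

lemma Finset.prod_Icc_ite_ite {M : Type*} [CommMonoid M] {l k : ℕ} (hlk : l ≤ k)
    (f g h : ℕ → M) :
    ∏ j ∈ Finset.Icc 1 (k + 1), (if j ≤ l then f j else if j ≤ k then g j else h j) =
      (∏ j ∈ Finset.Icc 1 l, f j) * (∏ j ∈ Finset.Icc (l + 1) k, g j) * h (k + 1) := by
  have hIoc (x y : ℕ) : Finset.Icc (x + 1) y = Finset.Ioc x y :=
    Finset.Icc_add_one_left_eq_Ioc x y
  rw [Finset.prod_Icc_succ_top (by omega), hIoc 0,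
    ← Finset.prod_Ioc_consecutive _ (Nat.zero_le l) hlk, ← hIoc 0, ← hIoc l, zero_add]
  simp only [show ¬ k + 1 ≤ l by omega, show ¬ k + 1 ≤ k by omega, if_false]
  congr 2
  · refine Finset.prod_congr rfl fun j hj => ?_
    rw [if_pos (Finset.mem_Icc.1 hj).2]
  · refine Finset.prod_congr rfl fun j hj => ?_
    obtain ⟨hj1, hj2⟩ := Finset.mem_Icc.1 hj
    rw [if_neg (by omega), if_pos hj2]

namespace ArithmeticFunction

lemma sigma_one_div_eq_sum_inv {n : ℕ} (hn : n ≠ 0) :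
    (σ 1 n : ℝ) / n = ∑ d ∈ n.divisors, (d : ℝ)⁻¹ := by
  rw [sigma_one_apply, ← Nat.sum_div_divisors, Nat.cast_sum, Finset.sum_div]
  refine Finset.sum_congr rfl fun d hd => ?_
  have hd0 : (d : ℝ) ≠ 0 := by exact_mod_cast Nat.ne_of_gt (Nat.pos_of_mem_divisors hd)
  rw [Nat.cast_div (Nat.dvd_of_mem_divisors hd) hd0]
  field_simp

lemma sigma_one_div_le_of_dvd {m n : ℕ} (hmn : m ∣ n) (hn : n ≠ 0) :
    (σ 1 m : ℝ) / m ≤ σ 1 n / n := by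
  rw [sigma_one_div_eq_sum_inv (ne_zero_of_dvd_ne_zero hn hmn), sigma_one_div_eq_sum_inv hn]
  exact Finset.sum_le_sum_of_subset_of_nonneg (Nat.divisors_subset_of_dvd hn hmn)
    fun _ _ _ => by positivity

lemma sigma_one_div_pos {n : ℕ} (hn : n ≠ 0) : 0 < (σ 1 n : ℝ) / n := by
  have := sigma_pos 1 n hn
  positivity

lemma sigma_one_div_prod {ι : Type*} (s : Finset ι) (f : ι → ℕ)
    (hs : (s : Set ι).Pairwise (Nat.Coprime on f)) :
    (σ 1 (∏ i ∈ s, f i) : ℝ) / (∏ i ∈ s, f i : ℕ) = ∏ i ∈ s, (σ 1 (f i) : ℝ) / f i := by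
  rw [isMultiplicative_sigma.map_prod f s hs, Nat.cast_prod, Nat.cast_prod,
    Finset.prod_div_distrib]

lemma prod_sigma_one_div_prime_pow_le {ι : Type*} {s t : Finset ι} (hst : s ⊆ t)
    {p e a : ι → ℕ} (hp : ∀ i ∈ t, (p i).Prime) (hinj : Set.InjOn p t)
    (hea : ∀ i ∈ s, e i ≤ a i) :
    ∏ i ∈ s, (σ 1 (p i ^ e i) : ℝ) / (p i ^ e i : ℕ) ≤
      σ 1 (∏ i ∈ t, p i ^ a i) / (∏ i ∈ t, p i ^ a i : ℕ) := by
  have hcop : (s : Set ι).Pairwise (Nat.Coprime on fun i => p i ^ e i) :=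
    fun i hi j hj hij => Nat.Coprime.pow _ _ <|
      (Nat.coprime_primes (hp i (hst hi)) (hp j (hst hj))).2 fun h => hij (hinj (hst hi) (hst hj) h)
  rw [← sigma_one_div_prod s _ hcop]
  refine sigma_one_div_le_of_dvd ?_
    (Finset.prod_ne_zero_iff.2 fun i hi => pow_ne_zero _ (hp i hi).ne_zero)
  exact (Finset.prod_dvd_prod_of_dvd _ _ fun i hi => pow_dvd_pow _ (hea i hi)).trans
    (Finset.prod_dvd_prod_of_subset _ _ _ hst)

lemma sigma_one_div_prime_sq {q : ℕ} (hq : q.Prime) :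
    (σ 1 (q ^ 2) : ℝ) / (q ^ 2 : ℕ) = 1 + 1 / q + 1 / q ^ 2 := by
  have : (q : ℝ) ≠ 0 := by exact_mod_cast hq.ne_zero
  rw [sigma_one_apply_prime_pow hq]
  simp only [Finset.sum_range_succ, Finset.sum_range_zero]
  push_cast
  field_simp
  ring

end ArithmeticFunction

lemma strictMono_mul_one_sub_sq_add_seven : StrictMono fun x : ℝ => x * ((1 - x) ^ 2 + 7) := by
  intro x y hxy
  have hquad : 0 < x ^ 2 + x * y + y ^ 2 - 2 * (x + y) + 8 := by
    nlinarith [sq_nonneg (x + y - 2), sq_nonneg (x - y)]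
  nlinarith [mul_pos (sub_pos.2 hxy) hquad]

lemma eight_mul_lt_of_pos_of_le_half {u : ℝ} (hu : 0 < u) (hu2 : u ≤ 1 / 2) :
    8 * u < (u + u ^ 2) * ((1 - (u + u ^ 2)) ^ 2 + 7) := by
  have : 0 < 2 * u ^ 2 * (1 - u) * (3 + u) := by
    have : 0 < 1 - u := by linarith
    positivity
  nlinarith [pow_pos hu 3, pow_pos (add_pos hu (pow_pos hu 2)) 3]

lemma one_div_sub_one_mul_eight_div_lt {q M : ℝ} (hq : 2 ≤ q) (hM : 1 + 1 / q + 1 / q ^ 2 ≤ M) :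
    1 / (M - 1) * (8 / ((2 - M) ^ 2 + 7)) < q := by
  set u := 1 / q with hu
  have hu0 : 0 < u := by positivity
  have hu2 : u ≤ 1 / 2 := one_div_le_one_div_of_le two_pos hq
  have huq : u * q = 1 := one_div_mul_cancel (by positivity)
  have hx : u + u ^ 2 ≤ M - 1 := by rw [hu, div_pow, one_pow]; linarith
  have hg : 8 * u < (M - 1) * ((1 - (M - 1)) ^ 2 + 7) :=
    (eight_mul_lt_of_pos_of_le_half hu0 hu2).trans_le
      (strictMono_mul_one_sub_sq_add_seven.monotone hx)
  have hx0 : 0 < M - 1 := (by positivity : 0 < u + u ^ 2).trans_le hx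
  rw [one_div_mul_eq_div, div_div, div_lt_iff₀ (by positivity)]
  nlinarith

theorem bounds_on_smallest_unknown_prime_b_general
    (l1 k1 k : ℕ) (hl1k1 : l1 ≤ k1) (hk1k : k1 < k)
    (p a b : ℕ → ℕ)
    (hp : ∀ j ∈ Finset.Icc 1 k, (p j).Prime)
    (hdist : ∀ i ∈ Finset.Icc 1 k, ∀ j ∈ Finset.Icc 1 k, i ≠ j → p i ≠ p j)
    (hb : ∀ j : ℕ, l1 < j → j ≤ k1 → 0 < b j ∧ b j ≤ a j)
    (n : ℕ) (hn : n = ∏ j ∈ Finset.Icc 1 k, p j ^ a j)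
    (tmax : ℝ)
    (hhigh : (σ 1 n : ℝ) / n ≤ tmax)
    (M : ℝ)
    (hM : M = tmax /
      ((∏ j ∈ Finset.Icc 1 l1, (σ 1 (p j ^ a j) : ℝ) / (p j ^ a j : ℕ)) *
       (∏ j ∈ Finset.Icc (l1 + 1) k1, (σ 1 (p j ^ b j) : ℝ) / (p j ^ b j : ℕ))))
    (ha2 : 2 ≤ a (k1 + 1)) :
    1 / (M - 1) * (8 / ((2 - M) ^ 2 + 7)) < p (k1 + 1) := by
  set D := (∏ j ∈ Finset.Icc 1 l1, (σ 1 (p j ^ a j) : ℝ) / (p j ^ a j : ℕ)) *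
    (∏ j ∈ Finset.Icc (l1 + 1) k1, (σ 1 (p j ^ b j) : ℝ) / (p j ^ b j : ℕ))
  -- exponents of the divisor `(known part of n) * p (k1 + 1) ^ 2` of `n`
  set e : ℕ → ℕ := fun j => if j ≤ l1 then a j else if j ≤ k1 then b j else 2
  have hq : (p (k1 + 1)).Prime := hp _ (Finset.mem_Icc.2 ⟨by omega, hk1k⟩)
  have hsplit : ∏ j ∈ Finset.Icc 1 (k1 + 1), (σ 1 (p j ^ e j) : ℝ) / (p j ^ e j : ℕ) =
      D * ((σ 1 (p (k1 + 1) ^ 2) : ℝ) / (p (k1 + 1) ^ 2 : ℕ)) :=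
    (Finset.prod_congr rfl fun j _ => by simp only [e]; split_ifs <;> rfl).trans <|
      Finset.prod_Icc_ite_ite hl1k1 (fun j => (σ 1 (p j ^ a j) : ℝ) / (p j ^ a j : ℕ))
        (fun j => (σ 1 (p j ^ b j) : ℝ) / (p j ^ b j : ℕ))
        fun j => (σ 1 (p j ^ 2) : ℝ) / (p j ^ 2 : ℕ)
  have hle : D * ((σ 1 (p (k1 + 1) ^ 2) : ℝ) / (p (k1 + 1) ^ 2 : ℕ)) ≤ tmax := by
    refine hsplit ▸ le_trans ?_ (hn ▸ hhigh)
    refine prod_sigma_one_div_prime_pow_le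
      (Finset.Icc_subset_Icc_right (by omega)) hp
      (fun i hi j hj h => by_contra fun hij => hdist i hi j hj hij h) fun j hj => ?_
    obtain ⟨hj1, hj2⟩ := Finset.mem_Icc.1 hj
    simp only [e]
    split_ifs with hl hk
    · exact le_rfl
    · exact (hb j (by omega) hk).2
    · rwa [show j = k1 + 1 by omega]
  have hD : 0 < D := by
    have hpow : ∀ j ∈ Finset.Icc 1 k1, ∀ c, p j ^ c ≠ 0 := fun j hj c =>
      pow_ne_zero c (hp j (Finset.Icc_subset_Icc_right hk1k.le hj)).ne_zero
    refine mul_pos (Finset.prod_pos fun j hj => sigma_one_div_pos (hpow j ?_ _))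
      (Finset.prod_pos fun j hj => sigma_one_div_pos (hpow j ?_ _))
    · exact Finset.Icc_subset_Icc_right hl1k1 hj
    · exact Finset.Icc_subset_Icc (by omega) le_rfl hj
  refine one_div_sub_one_mul_eight_div_lt (by exact_mod_cast hq.two_le) ?_
  rw [← sigma_one_div_prime_sq hq, hM, le_div_iff₀' hD]
  exact hle

theorem bounds_on_smallest_unknown_prime_b
    (l1 k1 k : ℕ) (hl1k1 : l1 ≤ k1) (hk1k : k1 < k)
    (p a b : ℕ → ℕ)
    (hp : ∀ j ∈ Finset.Icc 1 k, (p j).Prime)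
    (hdist : ∀ i ∈ Finset.Icc 1 k, ∀ j ∈ Finset.Icc 1 k, i ≠ j → p i ≠ p j)
    (ha : ∀ j ∈ Finset.Icc 1 k, 0 < a j)
    (hsorted : ∀ i j : ℕ, k1 + 1 ≤ i → i < j → j ≤ k → p i < p j)
    (hb : ∀ j : ℕ, l1 < j → j ≤ k1 → 0 < b j ∧ b j ≤ a j)
    (n : ℕ) (hn : n = ∏ j ∈ Finset.Icc 1 k, p j ^ a j)
    (tmin tmax : ℝ) (htmin : 0 < tmin) (htmax : 0 < tmax)
    (hlow : tmin ≤ (σ 1 n : ℝ) / n) (hhigh : (σ 1 n : ℝ) / n ≤ tmax)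
    (M : ℝ)
    (hM : M = tmax /
      ((∏ j ∈ Finset.Icc 1 l1, (σ 1 (p j ^ a j) : ℝ) / (p j ^ a j : ℕ)) *
       (∏ j ∈ Finset.Icc (l1 + 1) k1, (σ 1 (p j ^ b j) : ℝ) / (p j ^ b j : ℕ))))
    (ha2 : 2 ≤ a (k1 + 1)) :
    1 / (M - 1) * (8 / ((2 - M) ^ 2 + 7)) < p (k1 + 1) :=
  bounds_on_smallest_unknown_prime_b_general l1 k1 k hl1k1 hk1k p a b hp hdist hb n hn tmax hhigh M
    hM ha2
end

section
/- Let ℓ₁, k₁, k be integers with 0 ≤ ℓ₁ ≤ k₁ < k, and let n = ∏_{j=1}^{k} p_j^{a_j} where the p_j are pairwise distinct primes, the a_j are positive integers, and p_{k₁+1} < p_{k₁+2} < ⋯ < p_k. Let t_min and t_max be positive real numbers with t_min ≤ σ₋₁(n) ≤ t_max, and set m = t_min / ((∏_{j=1}^{ℓ₁} σ₋₁(p_j^{a_j})) · (∏_{j=ℓ₁+1}^{k₁} p_j/(p_j − 1))). If m > 1, then p_{k₁+1} < 1 + (k − k₁)/(m − 1). -/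
/-!
The abundancy index is multiplicative over the prime powers of `n`, and `σ(p^a)/p^a < p/(p-1)`.
Keeping the first `l₁` factors and bounding the next `k₁ - l₁` by `p/(p-1)` leaves
`m ≤ ∏_{j > k₁} σ(p_j^{a_j})/p_j^{a_j}`. Since `p_{k₁+1+i} ≥ P + i` for `P = p_{k₁+1}` and
`x/(x-1)` decreases, this tail is less than `∏_{i < k-k₁} (P+i)/(P+i-1) = (P-1+k-k₁)/(P-1)`,
and solving `m < (P-1+k-k₁)/(P-1)` for `P` gives the bound.
-/

open ArithmeticFunction
open scoped ArithmeticFunction.sigma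

open Finset
open scoped Function

lemma sigma_one_prod_div_prod {ι : Type*} {s : Finset ι} {f : ι → ℕ}
    (hf : (s : Set ι).Pairwise (Nat.Coprime on f)) :
    (σ 1 (∏ i ∈ s, f i) : ℝ) / (∏ i ∈ s, f i : ℕ) =
      ∏ i ∈ s, (σ 1 (f i) : ℝ) / (f i : ℕ) := by
  rw [isMultiplicative_sigma.map_prod f s hf]
  push_cast
  exact (prod_div_distrib ..).symm

lemma sigma_one_prod_prime_pow_div {ι : Type*} {s : Finset ι} {p : ι → ℕ} (a : ι → ℕ)
    (hp : ∀ i ∈ s, (p i).Prime) (hinj : (s : Set ι).InjOn p) :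
    (σ 1 (∏ i ∈ s, p i ^ a i) : ℝ) / (∏ i ∈ s, p i ^ a i : ℕ) =
      ∏ i ∈ s, (σ 1 (p i ^ a i) : ℝ) / (p i ^ a i : ℕ) :=
  sigma_one_prod_div_prod fun i hi j hj hij => Nat.Coprime.pow _ _
    ((Nat.coprime_primes (hp i hi) (hp j hj)).mpr (hinj.ne hi hj hij))

lemma Nat.Prime.sigma_one_pow_div_pos {p : ℕ} (hp : p.Prime) (a : ℕ) :
    0 < (σ 1 (p ^ a) : ℝ) / (p ^ a : ℕ) := by
  have hσ := sigma_pos 1 (p ^ a) (pow_ne_zero a hp.ne_zero)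
  have hp0 := hp.pos
  positivity

lemma Nat.Prime.sigma_one_pow_div_lt {p : ℕ} (hp : p.Prime) (a : ℕ) :
    (σ 1 (p ^ a) : ℝ) / (p ^ a : ℕ) < p / (p - 1) := by
  have hp1 : (1 : ℝ) < p := by exact_mod_cast hp.one_lt
  have hgeom : (σ 1 (p ^ a) : ℝ) * (p - 1) = p ^ (a + 1) - 1 := by
    rw [sigma_one_apply_prime_pow hp]
    push_cast
    exact geom_sum_mul _ _
  rw [div_lt_div_iff₀ (Nat.cast_pos.mpr (pow_pos hp.pos a)) (by linarith), hgeom]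
  push_cast
  rw [pow_succ]
  linarith

lemma antitoneOn_div_sub_one : AntitoneOn (fun x : ℝ => x / (x - 1)) (Set.Ioi 1) := by
  intro x hx y hy hxy
  simp only [Set.mem_Ioi] at hx hy
  rw [div_le_div_iff₀ (by linarith) (by linarith)]
  linarith

lemma prod_range_add_div_add_sub_one {x : ℝ} (hx : 1 < x) (r : ℕ) :
    ∏ i ∈ range r, (x + i) / (x + i - 1) = (x - 1 + r) / (x - 1) := by
  induction r with
  | zero => simp [div_self (sub_ne_zero.mpr hx.ne')]
  | succ r ih =>
    have hr : (0 : ℝ) ≤ r := r.cast_nonneg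
    rw [prod_range_succ, ih]
    field_simp [show x - 1 ≠ 0 by linarith, show x + r - 1 ≠ 0 by linarith]
    push_cast
    ring

lemma StrictMonoOn.add_le_apply_add {f : ℕ → ℕ} {s t : ℕ}
    (hf : StrictMonoOn f (Set.Icc s t)) {d : ℕ} (hd : s + d ≤ t) : f s + d ≤ f (s + d) := by
  induction d with
  | zero => rfl
  | succ d ih =>
    have hlt : f (s + d) < f (s + (d + 1)) :=
      hf ⟨by omega, by omega⟩ ⟨by omega, hd⟩ (by omega)
    have := ih (by omega)
    omega

lemma prod_Icc_sigma_one_prime_pow_div_lt {p a : ℕ → ℕ} {s t : ℕ} (hst : s ≤ t)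
    (hp : ∀ j ∈ Icc s t, (p j).Prime) (hmono : StrictMonoOn p (Set.Icc s t)) :
    ∏ j ∈ Icc s t, (σ 1 (p j ^ a j) : ℝ) / (p j ^ a j : ℕ) <
      ((p s : ℝ) + t - s) / ((p s : ℝ) - 1) := by
  have hmem : ∀ i ∈ range (t + 1 - s), s + i ∈ Icc s t := by
    intro i hi
    simp only [mem_range] at hi
    simp only [mem_Icc]
    omega
  have hs1 : (1 : ℝ) < p s := by exact_mod_cast (hp s (by simp [hst])).one_lt
  calc ∏ j ∈ Icc s t, (σ 1 (p j ^ a j) : ℝ) / (p j ^ a j : ℕ)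
      = ∏ i ∈ range (t + 1 - s),
          (σ 1 (p (s + i) ^ a (s + i)) : ℝ) / (p (s + i) ^ a (s + i) : ℕ) := by
        rw [← Ico_add_one_right_eq_Icc, prod_Ico_eq_prod_range]
    _ < ∏ i ∈ range (t + 1 - s), ((p s : ℝ) + i) / ((p s : ℝ) + i - 1) := by
        refine prod_lt_prod_of_nonempty (fun i hi => (hp _ (hmem i hi)).sigma_one_pow_div_pos _)
          (fun i hi => ?_) (nonempty_range_iff.mpr (by omega))
        have hgrowth : ((p s : ℝ) + i) ≤ p (s + i) := by
          exact_mod_cast hmono.add_le_apply_add (mem_Icc.mp (hmem i hi)).2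
        refine ((hp _ (hmem i hi)).sigma_one_pow_div_lt _).trans_le ?_
        have hi0 : (0 : ℝ) ≤ i := i.cast_nonneg
        exact antitoneOn_div_sub_one (show 1 < (p s : ℝ) + i by linarith)
          (show (1 : ℝ) < p (s + i) by linarith) hgrowth
    _ = ((p s : ℝ) + t - s) / ((p s : ℝ) - 1) := by
        rw [prod_range_add_div_add_sub_one hs1, Nat.cast_sub (by omega)]
        push_cast
        ring

lemma prod_Icc_one_eq_mul_mul {M : Type*} [CommMonoid M] (f : ℕ → M) {l k₁ k : ℕ}
    (hl : l ≤ k₁) (hk : k₁ ≤ k) :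
    ∏ j ∈ Icc 1 k, f j =
      (∏ j ∈ Icc 1 l, f j) * (∏ j ∈ Icc (l + 1) k₁, f j) * ∏ j ∈ Icc (k₁ + 1) k, f j := by
  have hIcc (b : ℕ) : Icc 1 b = Ioc 0 b := Icc_add_one_left_eq_Ioc 0 b
  rw [hIcc, hIcc, Icc_add_one_left_eq_Ioc, Icc_add_one_left_eq_Ioc,
    prod_Ioc_consecutive _ (Nat.zero_le l) hl, prod_Ioc_consecutive _ (Nat.zero_le k₁) hk]

lemma lt_one_add_div_sub_one_of_lt_div {x m r : ℝ} (hx : 1 < x) (hm : 1 < m)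
    (h : m < (x - 1 + r) / (x - 1)) : x < 1 + r / (m - 1) := by
  rw [lt_div_iff₀ (by linarith)] at h
  have : x - 1 < r / (m - 1) := by
    rw [lt_div_iff₀ (by linarith)]
    linarith
  linarith

theorem bounds_on_smallest_unknown_prime_c_general
    (l1 k1 k : ℕ) (hl1k1 : l1 ≤ k1) (hk1k : k1 < k)
    (p a : ℕ → ℕ)
    (hp : ∀ j ∈ Finset.Icc 1 k, (p j).Prime)
    (hdist : ∀ i ∈ Finset.Icc 1 k, ∀ j ∈ Finset.Icc 1 k, i ≠ j → p i ≠ p j)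
    (hsorted : ∀ i j : ℕ, k1 + 1 ≤ i → i < j → j ≤ k → p i < p j)
    (n : ℕ) (hn : n = ∏ j ∈ Finset.Icc 1 k, p j ^ a j)
    (tmin : ℝ)
    (hlow : tmin ≤ (σ 1 n : ℝ) / n)
    (m : ℝ)
    (hm : m = tmin /
      ((∏ j ∈ Finset.Icc 1 l1, (σ 1 (p j ^ a j) : ℝ) / (p j ^ a j : ℕ)) *
       (∏ j ∈ Finset.Icc (l1 + 1) k1, (p j : ℝ) / ((p j : ℝ) - 1))))
    (hm1 : 1 < m) :
    (p (k1 + 1) : ℝ) < 1 + ((k : ℝ) - (k1 : ℝ)) / (m - 1) := by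
  set S : ℕ → ℝ := fun j => (σ 1 (p j ^ a j) : ℝ) / (p j ^ a j : ℕ)
  have hmem {u v j : ℕ} (hu : 1 ≤ u) (hv : v ≤ k) (hj : j ∈ Icc u v) : j ∈ Icc 1 k := by
    simp only [mem_Icc] at hj ⊢
    omega
  have hS {u v : ℕ} (hu : 1 ≤ u) (hv : v ≤ k) : 0 < ∏ j ∈ Icc u v, S j :=
    prod_pos fun j hj => (hp j (hmem hu hv hj)).sigma_one_pow_div_pos _
  set A := ∏ j ∈ Icc 1 l1, S j
  set B := ∏ j ∈ Icc (l1 + 1) k1, (p j : ℝ) / ((p j : ℝ) - 1)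
  set C := ∏ j ∈ Icc (k1 + 1) k, S j
  have hratio : (σ 1 n : ℝ) / n = A * (∏ j ∈ Icc (l1 + 1) k1, S j) * C := by
    rw [← prod_Icc_one_eq_mul_mul S hl1k1 hk1k.le, hn]
    exact sigma_one_prod_prime_pow_div a hp fun i hi j hj h => by_contra (hdist i hi j hj · h)
  have hmid : ∏ j ∈ Icc (l1 + 1) k1, S j ≤ B :=
    prod_le_prod (fun j hj => ((hp j (hmem (by omega) hk1k.le hj)).sigma_one_pow_div_pos _).le)
      (fun j hj => ((hp j (hmem (by omega) hk1k.le hj)).sigma_one_pow_div_lt _).le)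
  have hmC : m ≤ C := by
    have hAB : 0 < A * B := mul_pos (hS le_rfl (by omega)) ((hS (by omega) hk1k.le).trans_le hmid)
    rw [hm, div_le_iff₀ hAB]
    calc tmin ≤ A * (∏ j ∈ Icc (l1 + 1) k1, S j) * C := hratio ▸ hlow
      _ ≤ A * B * C := mul_le_mul_of_nonneg_right
          (mul_le_mul_of_nonneg_left hmid (hS le_rfl (by omega)).le) (hS (by omega) le_rfl).le
      _ = C * (A * B) := by ring
  have htail : C < ((p (k1 + 1) : ℝ) - 1 + (k - k1)) / ((p (k1 + 1) : ℝ) - 1) := by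
    convert prod_Icc_sigma_one_prime_pow_div_lt hk1k (fun j hj => hp j (hmem (by omega) le_rfl hj))
      (fun i hi j hj hij => hsorted i j hi.1 hij hj.2) using 2
    push_cast
    ring
  have hP : (1 : ℝ) < p (k1 + 1) := Nat.one_lt_cast.mpr (hp (k1 + 1) (by simp; omega)).one_lt
  exact lt_one_add_div_sub_one_of_lt_div hP hm1 (hmC.trans_lt htail)

theorem bounds_on_smallest_unknown_prime_c
    (l1 k1 k : ℕ) (hl1k1 : l1 ≤ k1) (hk1k : k1 < k)
    (p a : ℕ → ℕ)
    (hp : ∀ j ∈ Finset.Icc 1 k, (p j).Prime)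
    (hdist : ∀ i ∈ Finset.Icc 1 k, ∀ j ∈ Finset.Icc 1 k, i ≠ j → p i ≠ p j)
    (ha : ∀ j ∈ Finset.Icc 1 k, 0 < a j)
    (hsorted : ∀ i j : ℕ, k1 + 1 ≤ i → i < j → j ≤ k → p i < p j)
    (n : ℕ) (hn : n = ∏ j ∈ Finset.Icc 1 k, p j ^ a j)
    (tmin tmax : ℝ) (htmin : 0 < tmin) (htmax : 0 < tmax)
    (hlow : tmin ≤ (σ 1 n : ℝ) / n) (hhigh : (σ 1 n : ℝ) / n ≤ tmax)
    (m : ℝ)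
    (hm : m = tmin /
      ((∏ j ∈ Finset.Icc 1 l1, (σ 1 (p j ^ a j) : ℝ) / (p j ^ a j : ℕ)) *
       (∏ j ∈ Finset.Icc (l1 + 1) k1, (p j : ℝ) / ((p j : ℝ) - 1))))
    (hm1 : 1 < m) :
    (p (k1 + 1) : ℝ) < 1 + ((k : ℝ) - (k1 : ℝ)) / (m - 1) :=
  bounds_on_smallest_unknown_prime_c_general l1 k1 k hl1k1 hk1k p a hp hdist hsorted n hn tmin hlow
    m hm hm1
end

section
/- Let p be an odd prime and let a be an even positive integer. Then for each divisor d of a + 1 with d > 1, the number σ(p^a) = 1 + p + p² + ⋯ + p^a has a prime factor q such that the multiplicative order of p modulo q equals d. -/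
/-!
Every prime factor of `Φ_d(p)` divides `σ(p^a) = (p^(a+1) - 1)/(p - 1)`, and a prime `q ∣ Φ_d(p)`
with `q ∤ d` has `o_q(p) = d`. So it suffices to rule out that every prime factor of `Φ_d(p)`
divides `d`. Writing `d = q^k m` with `q ∤ m`, a prime `q ∣ Φ_d(p)` makes `p` a primitive `m`-th
root of unity mod `q`, so `m ∣ q - 1`: every other prime factor of `d` is smaller than `q`. Hence
`Φ_d(p)` would be a power of the largest prime `r` of `d`. But `Φ_d(p)` divides
`1 + y + ⋯ + y^(r-1)` with `y = p^(d/r) ≡ 1 (mod r)`, which is `≡ r (mod r²)` for odd `r`, so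
`Φ_d(p) = r`, contradicting `Φ_d(p) > (p - 1)^φ(d) ≥ 2^(r-1)`.
-/

open ArithmeticFunction Polynomial Finset
open scoped ArithmeticFunction.sigma

theorem not_sq_dvd_geom_sum_of_dvd_sub_one {r : ℕ} (hr : r.Prime) (hodd : Odd r) {y : ℤ}
    (hy : (r : ℤ) ∣ y - 1) : ¬(r : ℤ) ^ 2 ∣ ∑ i ∈ range r, y ^ i := by
  intro hsum
  obtain ⟨b, hb⟩ := hy
  obtain rfl : y = 1 + r * b := by linarith
  -- `∑ i < r, (1 + r b)^i ≡ r (mod r²)`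
  have hcong := odd_sq_dvd_geom_sum₂_sub 1 b hodd
  simp only [one_pow, mul_one] at hcong
  have hsq : r ^ 2 ∣ r := by exact_mod_cast (dvd_sub_right hsum).mp hcong
  have := Nat.le_of_dvd hr.pos hsq
  nlinarith [hr.two_le]

namespace Polynomial

theorem cyclotomic_dvd_geom_sum_X_pow (R : Type*) [CommRing R] [IsDomain R] {m n : ℕ}
    (h : m ∈ n.properDivisors) : cyclotomic n R ∣ ∑ i ∈ range (n / m), (X ^ m) ^ i := by
  obtain ⟨hmn, hlt⟩ := Nat.mem_properDivisors.mp h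
  have hm : 0 < m := Nat.pos_of_dvd_of_pos hmn (by omega)
  have hne : (X ^ m - 1 : R[X]) ≠ 0 := by simpa using X_pow_sub_C_ne_zero (R := R) hm 1
  rw [← mul_dvd_mul_iff_left hne, mul_geom_sum, ← pow_mul, Nat.mul_div_cancel' hmn]
  exact X_pow_sub_one_mul_cyclotomic_dvd_X_pow_sub_one_of_dvd R h

section

variable {q : ℕ} [hq : Fact q.Prime]

theorem isPrimitiveRoot_of_prime_dvd_cyclotomic_eval {k m : ℕ} {x : ℤ} (hm : ¬q ∣ m)
    (h : (q : ℤ) ∣ (cyclotomic (q ^ k * m) ℤ).eval x) : IsPrimitiveRoot (x : ZMod q) m := by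
  have : NeZero (m : ZMod q) := ⟨by rwa [Ne, ZMod.natCast_eq_zero_iff]⟩
  rw [← isRoot_cyclotomic_prime_pow_mul_iff_of_charP (k := k), IsRoot.def, ← eq_intCast
    (Int.castRingHom (ZMod q)), cyclotomic.eval_apply, eq_intCast,
    ZMod.intCast_zmod_eq_zero_iff_dvd]
  exact h

theorem lt_of_prime_dvd_cyclotomic_eval {d s : ℕ} {x : ℤ} (hd : d ≠ 0)
    (h : (q : ℤ) ∣ (cyclotomic d ℤ).eval x) (hs : s.Prime) (hsd : s ∣ d) (hsq : s ≠ q) :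
    s < q := by
  obtain ⟨k, m, hqm, rfl⟩ := Nat.exists_eq_pow_mul_and_not_dvd hd q hq.out.ne_one
  have hm : m ≠ 0 := right_ne_zero_of_mul hd
  have hprim := isPrimitiveRoot_of_prime_dvd_cyclotomic_eval hqm h
  have hsm : s ∣ m :=
    (((Nat.coprime_primes hs hq.out).mpr hsq).pow_right k).dvd_of_dvd_mul_left hsd
  have hmq : m ∣ q - 1 :=
    hprim.eq_orderOf ▸ ZMod.orderOf_dvd_card_sub_one (hprim.ne_zero hm)
  have := Nat.le_of_dvd (Nat.sub_pos_of_lt hq.out.one_lt) (hsm.trans hmq)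
  omega

theorem prime_dvd_pow_div_sub_one_of_dvd_cyclotomic_eval {d : ℕ} {x : ℤ} (hd : d ≠ 0)
    (hqd : q ∣ d) (h : (q : ℤ) ∣ (cyclotomic d ℤ).eval x) : (q : ℤ) ∣ x ^ (d / q) - 1 := by
  obtain ⟨k, m, hqm, rfl⟩ := Nat.exists_eq_pow_mul_and_not_dvd hd q hq.out.ne_one
  have hk : k ≠ 0 := by
    rintro rfl
    exact hqm (by simpa using hqd)
  have hprim := isPrimitiveRoot_of_prime_dvd_cyclotomic_eval hqm h
  have hdiv : q ^ k * m / q = q ^ (k - 1) * m := by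
    rw [← Nat.succ_pred_eq_of_ne_zero hk, pow_succ]
    simp [Nat.mul_right_comm _ q, hq.out.pos]
  rw [hdiv, ← ZMod.intCast_zmod_eq_zero_iff_dvd]
  push_cast
  rw [mul_comm, pow_mul, hprim.pow_eq_one, one_pow, sub_self]

end

theorem not_sq_dvd_cyclotomic_eval {r d : ℕ} (hr : r.Prime) (hodd : Odd r) (hd : d ≠ 0)
    (hrd : r ∣ d) {x : ℤ} (h : (r : ℤ) ∣ (cyclotomic d ℤ).eval x) :
    ¬(r : ℤ) ^ 2 ∣ (cyclotomic d ℤ).eval x := by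
  have : Fact r.Prime := ⟨hr⟩
  have hproper : d / r ∈ d.properDivisors :=
    Nat.mem_properDivisors.mpr ⟨Nat.div_dvd_of_dvd hrd, Nat.div_lt_self (by omega) hr.one_lt⟩
  have hgeom := eval_dvd (x := x) (cyclotomic_dvd_geom_sum_X_pow ℤ hproper)
  simp only [eval_finsetSum, eval_pow, eval_X, Nat.div_div_self hrd hd] at hgeom
  exact fun hsq => not_sq_dvd_geom_sum_of_dvd_sub_one hr hodd
    (prime_dvd_pow_div_sub_one_of_dvd_cyclotomic_eval hd hrd h) (hsq.trans hgeom)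

theorem lt_natAbs_cyclotomic_eval {r d x : ℕ} (hx : 3 ≤ x) (hr : r.Prime) (hd : d ≠ 0)
    (hrd : r ∣ d) : r < ((cyclotomic d ℤ).eval (x : ℤ)).natAbs :=
  calc r ≤ 2 ^ (r - 1) := by have := Nat.lt_two_pow_self (n := r - 1); omega
    _ = 2 ^ r.totient := by rw [Nat.totient_prime hr]
    _ ≤ 2 ^ d.totient := Nat.pow_le_pow_right two_pos
      (Nat.le_of_dvd (Nat.totient_pos.mpr (by omega)) (Nat.totient_dvd_of_dvd hrd))
    _ ≤ (x - 1) ^ d.totient := Nat.pow_le_pow_left (by omega) _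
    _ < _ := sub_one_pow_totient_lt_natAbs_cyclotomic_eval
      (lt_of_lt_of_le hr.one_lt (Nat.le_of_dvd (by omega) hrd)) (by omega)

theorem exists_prime_dvd_cyclotomic_eval_orderOf_eq {d x : ℕ} (hx : 3 ≤ x) (hd1 : 1 < d)
    (hd : Odd d) : ∃ q : ℕ, q.Prime ∧ (q : ℤ) ∣ (cyclotomic d ℤ).eval (x : ℤ) ∧
      orderOf (x : ZMod q) = d := by
  by_contra! hne
  set C := (cyclotomic d ℤ).eval (x : ℤ)
  have hdvd_d : ∀ q : ℕ, q.Prime → q ∣ C.natAbs → q ∣ d := fun q hq hqC => by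
    have : Fact q.Prime := ⟨hq⟩
    by_contra hqd
    refine hne q hq (Int.natCast_dvd.mpr hqC) ?_
    have := isPrimitiveRoot_of_prime_dvd_cyclotomic_eval (k := 0) hqd
      (by rwa [pow_zero, one_mul, Int.natCast_dvd])
    exact_mod_cast this.eq_orderOf.symm
  have hC1 : C.natAbs ≠ 1 := by
    have := sub_one_lt_natAbs_cyclotomic_eval hd1 (q := x) (by omega)
    omega
  set r := C.natAbs.minFac
  have hr : r.Prime := Nat.minFac_prime hC1
  have hrC : r ∣ C.natAbs := Nat.minFac_dvd _
  have hrd : r ∣ d := hdvd_d r hr hrC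
  have hunique : ∀ {q : ℕ}, q.Prime → q ∣ C.natAbs → q = r := fun {q} hq hqC => by
    have : Fact q.Prime := ⟨hq⟩
    have : Fact r.Prime := ⟨hr⟩
    by_contra hqr
    have := lt_of_prime_dvd_cyclotomic_eval (by omega) (Int.natCast_dvd.mpr hqC) hr hrd
      (Ne.symm hqr)
    have := lt_of_prime_dvd_cyclotomic_eval (by omega) (Int.natCast_dvd.mpr hrC) hq
      (hdvd_d q hq hqC) hqr
    omega
  have hrlt : r < C.natAbs := lt_natAbs_cyclotomic_eval hx hr (by omega) hrd
  have hpow := Nat.eq_prime_pow_of_unique_prime_dvd (by omega) hunique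
  have hlen : 1 < C.natAbs.primeFactorsList.length :=
    (pow_lt_pow_iff_right₀ hr.one_lt).mp (by rwa [pow_one, ← hpow])
  have hsq : r ^ 2 ∣ C.natAbs := hpow ▸ pow_dvd_pow r hlen
  exact not_sq_dvd_cyclotomic_eval hr (hd.of_dvd_nat hrd) (by omega) hrd
    (Int.natCast_dvd.mpr hrC) (by exact_mod_cast Int.natCast_dvd.mpr hsq)

end Polynomial

theorem cyclotomic_eval_dvd_sigma_one_prime_pow {p a d : ℕ} (hp : p.Prime) (hd : d ∣ a + 1)
    (hd1 : d ≠ 1) : (cyclotomic d ℤ).eval (p : ℤ) ∣ σ 1 (p ^ a) := by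
  have := eval_dvd (x := (p : ℤ)) (cyclotomic_dvd_geom_sum_of_dvd ℤ hd hd1)
  simpa [eval_finsetSum, sigma_one_apply_prime_pow hp] using this

theorem sigma_prime_pow_has_prime_factor_of_order_general (p : ℕ) (hp : p.Prime) (hodd : Odd p)
    (a : ℕ) (heven : Even a) (d : ℕ) (hd : d ∣ a + 1) (hd1 : 1 < d) :
    ∃ q : ℕ, q.Prime ∧ q ∣ σ 1 (p ^ a) ∧ orderOf (p : ZMod q) = d := by
  have hp3 : 3 ≤ p := by obtain ⟨k, rfl⟩ := hodd; have := hp.two_le; omega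
  obtain ⟨q, hq, hqC, hord⟩ := exists_prime_dvd_cyclotomic_eval_orderOf_eq hp3 hd1
    (heven.add_one.of_dvd_nat hd)
  exact ⟨q, hq, Int.natCast_dvd_natCast.mp
    (hqC.trans (cyclotomic_eval_dvd_sigma_one_prime_pow hp hd (by omega))), hord⟩

theorem sigma_prime_pow_has_prime_factor_of_order (p : ℕ) (hp : p.Prime) (hodd : Odd p)
    (a : ℕ) (ha : 0 < a) (heven : Even a) (d : ℕ) (hd : d ∣ a + 1) (hd1 : 1 < d) :
    ∃ q : ℕ, q.Prime ∧ q ∣ σ 1 (p ^ a) ∧ orderOf (p : ZMod q) = d :=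
  sigma_prime_pow_has_prime_factor_of_order_general p hp hodd a heven d hd hd1
end

section
/- If an integer x is coprime to 31 and satisfies 1 < x ≤ 31^14, then v_31(x^30 − 1) ≤ ⌈log_31 x⌉ + 1, where ⌈log_31 x⌉ is the least integer greater than or equal to the base-31 logarithm of x. Moreover v_31(x^{o_31(x)} − 1) ≤ v_31(x^30 − 1). -/
def TeichL : List ℕ := [0, 1, 53583983995448866376061, 384579341610407244086936, 658108287646727363765376, 362944279754787980926977, 362944279754787980926978, 614728643141108107895471, 233488616041297485331934, 322845967781612393879788, 712132697451924664950736, 545413809040650207832366, 38293559700188267498316, 125086014200489568096654, 171088537924275384616759, 217757765936288451644891, 509665355810896812183590, 556334583822909879211722, 602337107546695695731827, 689129562046996996330165, 182009312706535055996115, 15290424295260598877745, 404577153965572869948693, 493934505705887778496547, 112694478606077155933010, 364478841992397282901503, 364478841992397282901504, 69314834100457900063105, 342843780136778019741545, 673839137751736397452420, 727423121747185263828480]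

def Teich (a : ℕ) : ℕ := TeichL.getD a 0

lemma teich_facts : ∀ a ∈ Finset.Icc 1 30, Teich a % 31 = a ∧ Teich a ^ 30 % 31 ^ 16 = 1 := by
  decide

lemma teich_large : ∀ a ∈ Finset.Icc 2 30, ∀ k ∈ Finset.Icc 2 16,
    31 ^ (k - 2) < Teich a % 31 ^ k := by
  decide

lemma prime31 : Prime (31 : ℤ) := by
  rw [Int.prime_iff_natAbs_prime]; norm_num

lemma key (k : ℕ) (hk2 : 2 ≤ k) (hk16 : k ≤ 16) (x : ℤ) (hx1 : 1 < x)
    (hnd : ¬ (31:ℤ) ∣ x) (hdvd : (31:ℤ)^k ∣ x^30 - 1) : (31:ℤ)^(k-2) < x := by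
  haveI : Fact (Nat.Prime 31) := ⟨by norm_num⟩
  set a : ℕ := (x % 31).toNat with ha
  have hxmod : (a : ℤ) = x % 31 := Int.toNat_of_nonneg (Int.emod_nonneg x (by norm_num))
  have hamod := Int.emod_lt_of_pos x (show (0:ℤ) < 31 by norm_num)
  have ha30 : a ≤ 30 := by omega
  have ha1 : 1 ≤ a := by
    rcases Nat.eq_zero_or_pos a with h | h
    · exfalso
      apply hnd
      rw [Int.dvd_iff_emod_eq_zero]
      omega
    · exact h
  obtain ⟨hta, ht30⟩ := teich_facts a (Finset.mem_Icc.mpr ⟨ha1, ha30⟩)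
  set t : ℕ := Teich a with htdef
  have ht1 : 1 ≤ t := by omega
  have ht30ge : 1 ≤ t ^ 30 := Nat.one_le_pow _ _ (by omega)
  -- 31^16 ∣ t^30 - 1 in ℕ
  have hdvdN : (31:ℕ) ^ 16 ∣ t ^ 30 - 1 := by
    have h1 : (1:ℕ) % 31 ^ 16 = 1 := Nat.mod_eq_of_lt (by norm_num)
    exact (Nat.modEq_iff_dvd' ht30ge).mp (show 1 % 31^16 = t^30 % 31^16 by rw [h1, ht30])
  set w : ℤ := (t : ℤ) with hw
  have hw30 : (31:ℤ) ^ 16 ∣ w ^ 30 - 1 := by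
    have := Int.natCast_dvd_natCast.mpr hdvdN
    rw [Nat.cast_sub ht30ge] at this
    push_cast at this
    exact this
  have hw30k : (31:ℤ) ^ k ∣ w ^ 30 - 1 := dvd_trans (pow_dvd_pow (31:ℤ) hk16) hw30
  have hxw30 : (31:ℤ) ^ k ∣ x ^ 30 - w ^ 30 := by
    have h := dvd_sub hdvd hw30k
    have e : x ^ 30 - 1 - (w ^ 30 - 1) = x ^ 30 - w ^ 30 := by ring
    rwa [e] at h
  set S : ℤ := ∑ i ∈ Finset.range 30, x ^ i * w ^ (30 - 1 - i) with hS
  have hgeom : S * (x - w) = x ^ 30 - w ^ 30 := geom_sum₂_mul x w 30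
  -- x ≡ a and w ≡ a mod 31
  have hxza : ((x : ZMod 31)) = ((a : ℕ) : ZMod 31) := by
    have hdva : (31:ℤ) ∣ x - (a : ℤ) := by
      have := Int.mul_ediv_add_emod x 31
      exact ⟨x / 31, by omega⟩
    have h0 : ((x - (a:ℤ) : ℤ) : ZMod 31) = 0 := by
      rw [ZMod.intCast_zmod_eq_zero_iff_dvd]
      exact_mod_cast hdva
    push_cast at h0
    linear_combination h0
  have hwza : ((w : ZMod 31)) = ((a : ℕ) : ZMod 31) := by
    have : ((t % 31 : ℕ) : ZMod 31) = ((t : ℕ) : ZMod 31) := ZMod.natCast_mod t 31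
    rw [hta] at this
    rw [hw]
    push_cast
    exact this.symm
  have haz : ((a : ℕ) : ZMod 31) ≠ 0 := by
    rw [Ne, ZMod.natCast_eq_zero_iff]
    omega
  have hSnd : ¬ (31:ℤ) ∣ S := by
    intro h
    have h0 : ((S : ℤ) : ZMod 31) = 0 := by
      rw [ZMod.intCast_zmod_eq_zero_iff_dvd]
      exact_mod_cast h
    rw [hS] at h0
    push_cast at h0
    rw [Finset.sum_congr rfl (fun i hi => by
      rw [hxza, hwza, ← pow_add,
        (by have := Finset.mem_range.mp hi; omega : i + (30 - 1 - i) = 29)])] at h0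
    rw [Finset.sum_const, Finset.card_range, nsmul_eq_mul] at h0
    have h30 : ((30 : ℕ) : ZMod 31) ≠ 0 := by
      rw [Ne, ZMod.natCast_eq_zero_iff]
      omega
    exact (mul_ne_zero h30 (pow_ne_zero 29 haz)) h0
  have hxw : (31:ℤ) ^ k ∣ x - w := by
    apply prime31.pow_dvd_of_dvd_mul_left k hSnd
    rw [hgeom]
    exact hxw30
  set m : ℕ := t % 31 ^ k with hm
  have hmle : m ≤ t := Nat.mod_le _ _
  have hmlt : m < 31 ^ k := Nat.mod_lt _ (by positivity)
  have hwm : (31:ℤ) ^ k ∣ w - (m : ℤ) := by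
    have := Int.natCast_dvd_natCast.mpr (Nat.dvd_sub_mod (n := 31 ^ k) t)
    rw [Nat.cast_sub hmle] at this
    push_cast at this
    exact this
  have hxm : (31:ℤ) ^ k ∣ x - (m : ℤ) := by
    have h := dvd_add hxw hwm
    have e : x - w + (w - (m:ℤ)) = x - (m:ℤ) := by ring
    rwa [e] at h
  by_cases hA : a = 1
  · -- then t = 1, m = 1
    have ht : t = 1 := by rw [htdef, hA]; decide
    have hm1 : m = 1 := by
      rw [hm, ht]
      exact Nat.mod_eq_of_lt (Nat.one_lt_pow (by omega) (by norm_num))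
    rw [hm1] at hxm
    have hle : (31:ℤ) ^ k ≤ x - 1 := Int.le_of_dvd (by omega) (by exact_mod_cast hxm)
    have h2 : (31:ℤ) ^ (k - 2) ≤ 31 ^ k := pow_le_pow_right₀ (by norm_num) (by omega)
    linarith
  · have ha2 : 2 ≤ a := by omega
    have hbig := teich_large a (Finset.mem_Icc.mpr ⟨ha2, ha30⟩) k (Finset.mem_Icc.mpr ⟨hk2, hk16⟩)
    rw [← htdef, ← hm] at hbig
    have hbigZ : (31:ℤ) ^ (k - 2) < (m : ℤ) := by exact_mod_cast hbig
    have hge : (m : ℤ) ≤ x := by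
      by_contra hlt
      push_neg at hlt
      have hdvd2 : (31:ℤ) ^ k ∣ (m:ℤ) - x := by
        have h := dvd_neg.mpr hxm
        rwa [neg_sub] at h
      have hle := Int.le_of_dvd (by omega) hdvd2
      have hms : (m:ℤ) < (31:ℤ) ^ k := by exact_mod_cast hmlt
      linarith
    exact lt_of_lt_of_le hbigZ hge


theorem val_31_bound (x : ℤ) (hx : IsCoprime x 31) (hx1 : 1 < x) (hx2 : x ≤ 31 ^ 14) :
    (padicValInt 31 (x ^ 30 - 1) : ℤ) ≤ ⌈Real.logb 31 (x : ℝ)⌉ + 1 ∧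
      padicValInt 31 (x ^ orderOf (x : ZMod 31) - 1) ≤ padicValInt 31 (x ^ 30 - 1) := by
  haveI : Fact (Nat.Prime 31) := ⟨by norm_num⟩
  have hnd : ¬ (31:ℤ) ∣ x := by
    intro h
    have : IsUnit (31 : ℤ) := hx.isUnit_of_dvd' h dvd_rfl
    rw [Int.isUnit_iff] at this
    omega
  have hne : x ^ 30 - 1 ≠ 0 := by
    have : (1:ℤ) < x ^ 30 := one_lt_pow₀ hx1 (by norm_num)
    omega
  set k := padicValInt 31 (x ^ 30 - 1) with hk
  have hdvd : (31:ℤ) ^ k ∣ x ^ 30 - 1 := padicValInt_dvd _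
  constructor
  · -- part 1
    by_cases hk1 : k ≤ 1
    · have hlog : (0:ℝ) < Real.logb 31 (x : ℝ) := by
        apply Real.logb_pos (by norm_num)
        exact_mod_cast hx1
      have : 0 < ⌈Real.logb 31 (x : ℝ)⌉ := Int.ceil_pos.mpr hlog
      omega
    · push_neg at hk1
      by_cases hk16 : k ≤ 16
      · have hlt : (31:ℤ)^(k-2) < x := key k hk1 hk16 x hx1 hnd hdvd
        have hltR : ((31:ℝ))^(k-2) < (x : ℝ) := by exact_mod_cast hlt
        have hlog : ((k:ℝ) - 2) < Real.logb 31 (x : ℝ) := by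
          have h1 : Real.logb 31 ((31:ℝ)^(k-2)) < Real.logb 31 (x:ℝ) :=
            Real.logb_lt_logb (by norm_num) (by positivity) hltR
          rw [Real.logb_pow, Real.logb_self_eq_one (by norm_num), mul_one,
            Nat.cast_sub (show 2 ≤ k by omega)] at h1
          norm_num at h1
          exact h1
        have : ((k:ℤ) - 2) < ⌈Real.logb 31 (x : ℝ)⌉ := by
          rw [Int.lt_ceil]; push_cast; exact hlog
        omega
      · exfalso
        push_neg at hk16
        have h16 : (31:ℤ) ^ 16 ∣ x ^ 30 - 1 :=
          dvd_trans (pow_dvd_pow (31:ℤ) (by omega)) hdvd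
        have := key 16 (by norm_num) le_rfl x hx1 hnd h16
        norm_num at this
        omega
  · -- part 2
    set d := orderOf (x : ZMod 31) with hdorder
    have hx0 : (x : ZMod 31) ≠ 0 := by
      rw [Ne, ZMod.intCast_zmod_eq_zero_iff_dvd]
      exact_mod_cast hnd
    have hpow : (x : ZMod 31) ^ 30 = 1 := by
      have := ZMod.pow_card_sub_one_eq_one hx0
      norm_num at this
      exact this
    have hd : d ∣ 30 := orderOf_dvd_of_pow_eq_one hpow
    obtain ⟨m, hm⟩ := hd
    have hdvd2 : x ^ d - 1 ∣ x ^ 30 - 1 := by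
      have := sub_dvd_pow_sub_pow (x ^ d) 1 m
      rwa [one_pow, ← pow_mul, ← hm] at this
    have h1 : (31:ℤ) ^ padicValInt 31 (x ^ d - 1) ∣ x ^ 30 - 1 :=
      dvd_trans (padicValInt_dvd _) hdvd2
    rcases (padicValInt_dvd_iff _ _).mp h1 with h | h
    · exact absurd h hne
    · exact h
end

section
/- Every odd perfect number n has at least three distinct prime factors, i.e. ω(n) ≥ 3. -/
open ArithmeticFunction
open scoped ArithmeticFunction.sigma

/-! The abundancy σ(n)/n = ∏ σ(p^k)/p^k is bounded by ∏_{p ∣ n} p/(p-1). For at most two odd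
prime factors this product is at most (3/2)(5/4) = 15/8 < 2, so n cannot be perfect. -/

open Finset

theorem Nat.Prime.sigma_one_pow_mul_sub_one_le {p : ℕ} (hp : p.Prime) (k : ℕ) :
    σ 1 (p ^ k) * (p - 1) ≤ p ^ k * p := by
  rw [sigma_one_apply_prime_pow hp, geom_sum_mul_of_one_le hp.one_le, ← pow_succ]
  exact Nat.sub_le _ _

theorem sigma_one_mul_prod_sub_one_le (n : ℕ) :
    σ 1 n * ∏ p ∈ n.primeFactors, (p - 1) ≤ n * ∏ p ∈ n.primeFactors, p := by
  rcases eq_or_ne n 0 with rfl | hn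
  · simp
  have hσ := isMultiplicative_sigma.multiplicative_factorization (σ 1) hn
  have hn' := Nat.prod_factorization_pow_eq_self hn
  rw [Nat.prod_factorization_eq_prod_primeFactors] at hσ hn'
  calc σ 1 n * ∏ p ∈ n.primeFactors, (p - 1)
      = ∏ p ∈ n.primeFactors, σ 1 (p ^ n.factorization p) * (p - 1) := by
        rw [hσ, prod_mul_distrib]
    _ ≤ ∏ p ∈ n.primeFactors, p ^ n.factorization p * p :=
        prod_le_prod' fun p hp => (Nat.prime_of_mem_primeFactors hp).sigma_one_pow_mul_sub_one_le _
    _ = n * ∏ p ∈ n.primeFactors, p := by rw [prod_mul_distrib, hn']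

theorem Finset.prod_lt_two_mul_prod_sub_one_of_odd {s : Finset ℕ} (hs : ∀ p ∈ s, Odd p ∧ 1 < p)
    (hcard : s.card ≤ 2) : ∏ p ∈ s, p < 2 * ∏ p ∈ s, (p - 1) := by
  interval_cases h : s.card
  · simp [card_eq_zero.mp h]
  · obtain ⟨p, rfl⟩ := card_eq_one.mp h
    obtain ⟨⟨a, rfl⟩, hp⟩ := hs p (mem_singleton_self p)
    simp only [prod_singleton]
    omega
  · obtain ⟨p, q, hpq, rfl⟩ := card_eq_two.mp h
    obtain ⟨⟨a, rfl⟩, hp⟩ := hs p (by simp)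
    obtain ⟨⟨b, rfl⟩, hq⟩ := hs q (by simp)
    rw [prod_pair hpq, prod_pair hpq, Nat.add_sub_cancel, Nat.add_sub_cancel]
    have ha : 1 ≤ a := by omega
    have hb : 1 ≤ b := by omega
    rcases lt_or_gt_of_ne hpq with hab | hab
    · have hb2 : 2 ≤ b := by omega
      nlinarith
    · have ha2 : 2 ≤ a := by omega
      nlinarith

theorem odd_perfect_omega_ge_three (n : ℕ) (hn : 0 < n) (hodd : Odd n)
    (hperf : σ 1 n = 2 * n) :
    3 ≤ n.primeFactors.card := by
  by_contra! hcard
  have hfactors : ∀ p ∈ n.primeFactors, Odd p ∧ 1 < p := fun p hp =>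
    ⟨hodd.of_dvd_nat (Nat.dvd_of_mem_primeFactors hp), (Nat.prime_of_mem_primeFactors hp).one_lt⟩
  have hlt := Nat.mul_lt_mul_of_pos_left (prod_lt_two_mul_prod_sub_one_of_odd hfactors (by omega)) hn
  have hle := sigma_one_mul_prod_sub_one_le n
  rw [hperf] at hle
  linarith
end
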